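/- Let Λ ⊆ ℝ^M be a nonempty closed convex set, μ > 0, L > 0, η₂ = 1/L, and let Q : ℝ^M → ℝ be differentiable with L-Lipschitz gradient such that h(λ) := Q(λ) − (μ/2)‖λ‖₂² is convex. Let λ* be a minimizer of Q over Λ, let λ₀ ∈ Λ, and for s = 0, 1, 2, … let e_s ∈ ℝ^M and λ_{s+1} = argmin_{λ ∈ Λ} { ⟨∇h(λ_s) + e_s, λ⟩ + (μ/2)‖λ‖₂² + (1/(2η₂))‖λ − λ_s‖₂² }. Set c_s = (1 + μ η₂)^s. Then for every m ≥ 1: ( ∑_{s=1}^m c_{s−1} [Q(λ_s) − Q(λ*)] ) / ( ∑_{s=1}^m c_{s−1} ) ≤ (1 + μη₂)^{−m+1} / (2η₂) · ‖λ* − λ₀‖₂² + 2 (1 + μη₂)^{−m+1} ( ∑_{s=0}^{m−1} √η₂ (1 + μη₂)^{s/2} ‖e_s‖₂ )². -/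

import Mathlib

/-!
The strong-convexity lower bound for `Q` at `λ_s`, the descent lemma for the `L`-smooth `Q` and
the variational inequality of the prox step tested against `λ*` combine into the one-step estimate
`2η (Q λ_{s+1} - Q λ*) + (1 + μη) ‖λ* - λ_{s+1}‖² ≤ ‖λ* - λ_s‖² + 2η ‖e_s‖ ‖λ* - λ_{s+1}‖`.
Weighted by `(1 + μη)^s` these telescope; for `v_s = (1 + μη)^{s/2} ‖λ* - λ_s‖` the result has the
form `v_n² ≤ v_0² + 2 ∑ b_s v_{s+1}`, and evaluating it where `v` is maximal gives the discrete
Gronwall bound `v_n ≤ v_0 + 2 ∑ b_s`, which controls the error terms.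
-/

open scoped RealInnerProductSpace
open Set Finset

variable {F : Type*} [NormedAddCommGroup F] [InnerProductSpace ℝ F]

lemma IsMinOn.prox_variational_ineq {Λ : Set F} (hΛ : Convex ℝ Λ) {v z w y : F} {μ η : ℝ}
    (hmin : IsMinOn (fun x => ⟪v, x⟫ + μ / 2 * ‖x‖ ^ 2 + 1 / (2 * η) * ‖x - z‖ ^ 2) Λ w)
    (hw : w ∈ Λ) (hy : y ∈ Λ) :
    0 ≤ ⟪v, y - w⟫ + μ * ⟪w, y - w⟫ + η⁻¹ * ⟪w - z, y - w⟫ := by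
  have hderiv := ((innerSL ℝ v).hasFDerivAt.add
    ((hasStrictFDerivAt_norm_sq w).hasFDerivAt.const_mul (μ / 2))).add
    (((hasFDerivAt_id w).sub_const z).norm_sq.const_mul (1 / (2 * η)))
  have := hmin.localize.hasFDerivWithinAt_nonneg hderiv.hasFDerivWithinAt
    (sub_mem_posTangentConeAt_of_segment_subset (hΛ.segment_subset hw hy))
  convert this using 1
  simp only [id_eq, ContinuousLinearMap.comp_id, add_apply, smul_apply, coe_innerSL_apply,
    nsmul_eq_mul, Nat.cast_ofNat, smul_eq_mul, inner_sub_left, inner_sub_right]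
  ring

variable [CompleteSpace F]

lemma HasGradientAt.hasDerivAt_comp_lineMap {f : F → ℝ} {g x y : F} {t : ℝ}
    (hf : HasGradientAt f g (AffineMap.lineMap x y t)) :
    HasDerivAt (fun s : ℝ => f (AffineMap.lineMap x y s)) ⟪g, y - x⟫ t :=
  hf.hasFDerivAt.comp_hasDerivAt t AffineMap.hasDerivAt_lineMap

lemma ConvexOn.add_inner_gradient_le {f : F → ℝ} (hf : ConvexOn ℝ univ f) {x g : F}
    (hg : HasGradientAt f g x) (y : F) : f x + ⟪g, y - x⟫ ≤ f y := by
  have hline : ConvexOn ℝ univ fun t : ℝ => f (AffineMap.lineMap x y t) := by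
    have := hf.comp_affineMap (AffineMap.lineMap x y)
    rwa [preimage_univ] at this
  have hderiv : HasDerivAt (fun t : ℝ => f (AffineMap.lineMap x y t)) ⟪g, y - x⟫ 0 :=
    HasGradientAt.hasDerivAt_comp_lineMap (by rwa [AffineMap.lineMap_apply_zero])
  have := hline.le_slope_of_hasDerivAt (mem_univ 0) (mem_univ 1) zero_lt_one hderiv
  rw [slope_def_field] at this
  simp only [AffineMap.lineMap_apply_zero, AffineMap.lineMap_apply_one] at this
  linarith

lemma hasGradientAt_half_mul_norm_sq (μ : ℝ) (x : F) :
    HasGradientAt (fun y : F => μ / 2 * ‖y‖ ^ 2) (μ • x) x := by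
  rw [hasGradientAt_iff_hasFDerivAt]
  refine ((hasStrictFDerivAt_norm_sq x).hasFDerivAt.const_mul (μ / 2)).congr_fderiv ?_
  ext d
  simp only [smul_apply, coe_innerSL_apply, nsmul_eq_mul, Nat.cast_ofNat,
    smul_eq_mul, map_smul, InnerProductSpace.toDual_apply_apply]
  ring

lemma HasGradientAt.sub_half_mul_norm_sq {Q : F → ℝ} {g x : F} (hQ : HasGradientAt Q g x)
    (μ : ℝ) : HasGradientAt (fun y => Q y - μ / 2 * ‖y‖ ^ 2) (g - μ • x) x := by
  rw [hasGradientAt_iff_hasFDerivAt, map_sub]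
  exact hQ.hasFDerivAt.sub (hasGradientAt_half_mul_norm_sq μ x).hasFDerivAt

lemma add_inner_gradient_add_half_mul_sq_le {Q : F → ℝ} {μ : ℝ}
    (hQ : ConvexOn ℝ univ fun x => Q x - μ / 2 * ‖x‖ ^ 2) {x g : F} (hg : HasGradientAt Q g x)
    (y : F) : Q x + ⟪g, y - x⟫ + μ / 2 * ‖y - x‖ ^ 2 ≤ Q y := by
  have := hQ.add_inner_gradient_le (hg.sub_half_mul_norm_sq μ) y
  rw [norm_sub_sq_real, inner_sub_right, real_inner_comm x y]
  simp only [inner_sub_left, inner_sub_right, real_inner_smul_left, real_inner_self_eq_norm_sq]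
    at this
  linarith

lemma le_add_inner_gradient_add_half_mul_sq {Q : F → ℝ} (hQ : Differentiable ℝ Q) {L : ℝ}
    (hlip : ∀ x y, ‖gradient Q x - gradient Q y‖ ≤ L * ‖x - y‖) (x y : F) :
    Q y ≤ Q x + ⟪gradient Q x, y - x⟫ + L / 2 * ‖y - x‖ ^ 2 := by
  set ψ : ℝ → ℝ := fun t =>
    Q (AffineMap.lineMap x y t) - t * ⟪gradient Q x, y - x⟫ - L / 2 * ‖y - x‖ ^ 2 * t ^ 2
  have hψ : ∀ t, HasDerivAt ψ (⟪gradient Q (AffineMap.lineMap x y t) - gradient Q x, y - x⟫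
      - L * ‖y - x‖ ^ 2 * t) t := by
    intro t
    have := (((hQ _).hasGradientAt.hasDerivAt_comp_lineMap (x := x) (y := y) (t := t)).sub
      ((hasDerivAt_id t).mul_const ⟪gradient Q x, y - x⟫)).sub
      ((hasDerivAt_pow 2 t).const_mul (L / 2 * ‖y - x‖ ^ 2))
    refine this.congr_deriv ?_
    rw [inner_sub_left]
    ring
  have hψ_anti : AntitoneOn ψ (Icc 0 1) := by
    refine antitoneOn_of_hasDerivWithinAt_nonpos (convex_Icc 0 1)
      (fun t _ => (hψ t).continuousAt.continuousWithinAt) (fun t _ => (hψ t).hasDerivWithinAt) ?_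
    intro t ht
    rw [interior_Icc] at ht
    have hdist : ‖AffineMap.lineMap x y t - x‖ = t * ‖y - x‖ := by
      rw [← dist_eq_norm, dist_lineMap_left, Real.norm_of_nonneg ht.1.le, dist_comm,
        dist_eq_norm]
    calc ⟪gradient Q (AffineMap.lineMap x y t) - gradient Q x, y - x⟫ - L * ‖y - x‖ ^ 2 * t
        ≤ L * ‖AffineMap.lineMap x y t - x‖ * ‖y - x‖ - L * ‖y - x‖ ^ 2 * t := by
          gcongr
          exact (real_inner_le_norm _ _).trans
            (mul_le_mul_of_nonneg_right (hlip _ _) (norm_nonneg _))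
      _ = 0 := by rw [hdist]; ring
  have := hψ_anti (left_mem_Icc.2 zero_le_one) (right_mem_Icc.2 zero_le_one) zero_le_one
  simp only [ψ, AffineMap.lineMap_apply_zero, AffineMap.lineMap_apply_one] at this
  linarith

lemma prox_gradient_step_le {Λ : Set F} (hΛ : Convex ℝ Λ) {Q : F → ℝ} {μ L η : ℝ}
    (hμ : 0 ≤ μ) (hη : 0 < η) (hηL : η * L ≤ 1) (hQ : Differentiable ℝ Q)
    (hlip : ∀ x y, ‖gradient Q x - gradient Q y‖ ≤ L * ‖x - y‖)
    (hconv : ConvexOn ℝ univ fun x => Q x - μ / 2 * ‖x‖ ^ 2) {a b e w : F} (ha : a ∈ Λ)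
    (hw : w ∈ Λ)
    (hmin : IsMinOn (fun x => ⟪gradient (fun y => Q y - μ / 2 * ‖y‖ ^ 2) b + e, x⟫
      + μ / 2 * ‖x‖ ^ 2 + 1 / (2 * η) * ‖x - b‖ ^ 2) Λ w) :
    2 * η * (Q w - Q a) + (1 + μ * η) * ‖a - w‖ ^ 2
      ≤ ‖a - b‖ ^ 2 + 2 * η * (‖e‖ * ‖a - w‖) := by
  rw [((hQ b).hasGradientAt.sub_half_mul_norm_sq μ).gradient] at hmin
  have h2η : 0 ≤ 2 * η := by positivity
  have hgap : Q w - Q a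
      ≤ -⟪gradient Q b, a - w⟫ + L / 2 * ‖w - b‖ ^ 2 - μ / 2 * ‖a - b‖ ^ 2 := by
    have hsmooth := le_add_inner_gradient_add_half_mul_sq hQ hlip b w
    have hstrong := add_inner_gradient_add_half_mul_sq_le hconv (hQ b).hasGradientAt a
    have hlin : ⟪gradient Q b, w - b⟫ - ⟪gradient Q b, a - b⟫ = -⟪gradient Q b, a - w⟫ := by
      simp only [inner_sub_right]; ring
    linarith
  have hvi : 0 ≤ 2 * η * ⟪gradient Q b, a - w⟫ + 2 * η * ⟪e, a - w⟫
      + (1 + μ * η) * (‖a - b‖ ^ 2 - ‖a - w‖ ^ 2 - ‖w - b‖ ^ 2) := by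
    have hpolar : ‖a - b‖ ^ 2 = ‖a - w‖ ^ 2 + 2 * ⟪w - b, a - w⟫ + ‖w - b‖ ^ 2 := by
      rw [real_inner_comm, ← norm_add_sq_real, sub_add_sub_cancel]
    refine (mul_nonneg h2η (hmin.prox_variational_ineq hΛ hw ha)).trans_eq ?_
    rw [hpolar]
    field_simp
    simp only [inner_add_left, inner_sub_left, real_inner_smul_left]
    ring
  have hcs : ⟪e, a - w⟫ ≤ ‖e‖ * ‖a - w‖ := real_inner_le_norm e (a - w)
  linarith [mul_le_mul_of_nonneg_left hgap h2η, mul_le_mul_of_nonneg_left hcs h2η,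
    mul_nonneg (mul_nonneg hμ hη.le) (sq_nonneg ‖w - b‖),
    mul_nonneg (sub_nonneg.2 hηL) (sq_nonneg ‖w - b‖)]

lemma le_add_two_mul_sum_of_sq_le {v b : ℕ → ℝ} (hv : ∀ j, 0 ≤ v j) (hb : ∀ s, 0 ≤ b s)
    (h : ∀ j, v j ^ 2 ≤ v 0 ^ 2 + 2 * ∑ s ∈ range j, b s * v (s + 1)) (n : ℕ) :
    v n ≤ v 0 + 2 * ∑ s ∈ range n, b s := by
  obtain ⟨k, hk, hmax⟩ := (range (n + 1)).exists_max_image v nonempty_range_add_one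
  have hkn : k ≤ n := Nat.lt_succ_iff.1 (mem_range.1 hk)
  have hle : ∀ i ≤ n, v i ≤ v k := fun i hi => hmax i (mem_range.2 (Nat.lt_succ_of_le hi))
  set B := ∑ s ∈ range n, b s
  have hcross : ∑ s ∈ range k, b s * v (s + 1) ≤ B * v k := by
    calc ∑ s ∈ range k, b s * v (s + 1)
        ≤ ∑ s ∈ range k, b s * v k := by
          gcongr with s hs
          · exact hb s
          · exact hle _ (by have := mem_range.1 hs; omega)
      _ ≤ B * v k := by
          rw [← sum_mul]
          gcongr
          · exact hv k
          · exact sum_le_sum_of_subset_of_nonneg (range_subset_range.2 hkn) fun i _ _ => hb i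
  have hk2 : v k ^ 2 ≤ v 0 ^ 2 + 2 * B * v k := by linarith [h k]
  have hB : 0 ≤ B := sum_nonneg fun s _ => hb s
  have hv0 : v 0 ≤ v k := hle 0 (Nat.zero_le n)
  have : v k ≤ v 0 + 2 * B := by nlinarith [hv 0]
  exact (hle n le_rfl).trans this

lemma sum_pow_mul_gap_add_sq_le {η a : ℝ} (ha : 0 < a) {Δ u ε : ℕ → ℝ}
    (hrec : ∀ s, 2 * η * Δ s + a ^ 2 * u (s + 1) ^ 2 ≤ u s ^ 2 + 2 * η * (ε s * u (s + 1)))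
    (n : ℕ) :
    2 * η * ∑ s ∈ range n, (a ^ 2) ^ s * Δ s + (a ^ n * u n) ^ 2
      ≤ u 0 ^ 2 + 2 * ∑ s ∈ range n, η * a ^ s * ε s / a * (a ^ (s + 1) * u (s + 1)) := by
  induction n with
  | zero => simp
  | succ n ih =>
    have hstep := mul_le_mul_of_nonneg_left (hrec n) (by positivity : 0 ≤ (a ^ 2) ^ n)
    have hweights : (a ^ 2) ^ n * (2 * η * Δ n + a ^ 2 * u (n + 1) ^ 2)
          - (a ^ 2) ^ n * (u n ^ 2 + 2 * η * (ε n * u (n + 1)))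
        = 2 * η * ((a ^ 2) ^ n * Δ n) + (a ^ (n + 1) * u (n + 1)) ^ 2 - (a ^ n * u n) ^ 2
          - 2 * (η * a ^ n * ε n / a * (a ^ (n + 1) * u (n + 1))) := by
      field_simp
      ring
    rw [sum_range_succ, sum_range_succ]
    linarith

lemma two_mul_pow_mul_sum_gap_le {η a : ℝ} (hη : 0 ≤ η) (ha : 1 ≤ a) {Δ u ε : ℕ → ℝ}
    (hΔ : ∀ s, 0 ≤ Δ s) (hu : ∀ s, 0 ≤ u s) (hε : ∀ s, 0 ≤ ε s)
    (hrec : ∀ s, 2 * η * Δ s + a ^ 2 * u (s + 1) ^ 2 ≤ u s ^ 2 + 2 * η * (ε s * u (s + 1)))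
    (k : ℕ) :
    2 * η * ((a ^ 2) ^ k * ∑ s ∈ range (k + 1), (a ^ 2) ^ s * Δ s)
      ≤ (∑ s ∈ range (k + 1), (a ^ 2) ^ s)
        * (u 0 ^ 2 + 4 * a ^ 2 * (∑ s ∈ range (k + 1), η * a ^ s * ε s / a) ^ 2) := by
  have ha0 : 0 < a := by linarith
  have htel := sum_pow_mul_gap_add_sq_le ha0 hrec
  have hb : ∀ s, 0 ≤ η * a ^ s * ε s / a := fun s =>
    div_nonneg (mul_nonneg (mul_nonneg hη (pow_nonneg ha0.le s)) (hε s)) ha0.le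
  -- For `k ≥ 1` the total weight exceeds `c^k (1 + 1/c)`, enough to absorb the cross term
  -- `2 B u₀` by AM-GM; for `k = 0` one completes the square in `a u₁` instead.
  cases k with
  | zero =>
    have h1 := htel 1
    simp only [sum_range_one, pow_zero, one_mul, zero_add, pow_one, mul_one] at h1 ⊢
    nlinarith [sq_nonneg (a * u 1 - η * ε 0 / a),
      mul_nonneg (by nlinarith : 0 ≤ 4 * a ^ 2 - 1) (sq_nonneg (η * ε 0 / a))]
  | succ j =>
    set c := a ^ 2
    set B := ∑ s ∈ range (j + 2), η * a ^ s * ε s / a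
    have hc : 1 ≤ c := one_le_pow₀ ha
    have hB : 0 ≤ B := sum_nonneg fun s _ => hb s
    have hS : ∀ n, 0 ≤ 2 * η * ∑ s ∈ range n, c ^ s * Δ s := fun n =>
      mul_nonneg (by positivity) (sum_nonneg fun s _ => mul_nonneg (by positivity) (hΔ s))
    have hgron := le_add_two_mul_sum_of_sq_le (v := fun s => a ^ s * u s)
      (fun s => mul_nonneg (pow_nonneg ha0.le s) (hu s)) hb
      (fun n => by simpa using le_of_add_le_of_nonneg_right (htel n) (hS n))
    have hcross : ∑ s ∈ range (j + 2), η * a ^ s * ε s / a * (a ^ (s + 1) * u (s + 1))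
        ≤ B * (u 0 + 2 * B) := by
      rw [sum_mul]
      gcongr with s hs
      · exact hb s
      · have hpartial : ∑ i ∈ range (s + 1), η * a ^ i * ε i / a ≤ B :=
          sum_le_sum_of_subset_of_nonneg (range_subset_range.2 (mem_range.1 hs)) fun i _ _ => hb i
        have := hgron (s + 1)
        rw [pow_zero, one_mul] at this
        linarith
    have hgap : 2 * η * ∑ s ∈ range (j + 2), c ^ s * Δ s ≤ u 0 ^ 2 + 2 * B * (u 0 + 2 * B) := by
      linarith [htel (j + 2), sq_nonneg (a ^ (j + 2) * u (j + 2))]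
    have hW : c ^ j * (1 + c) ≤ ∑ s ∈ range (j + 2), c ^ s := by
      rw [sum_range_succ, sum_range_succ, pow_succ]
      linarith [sum_nonneg fun s (_ : s ∈ range j) => pow_nonneg (zero_le_one.trans hc) s]
    have hamgm : c * (u 0 ^ 2 + 2 * B * (u 0 + 2 * B)) ≤ (1 + c) * (u 0 ^ 2 + 4 * c * B ^ 2) := by
      nlinarith [sq_nonneg (u 0 - c * B), sq_nonneg (c * B)]
    calc 2 * η * (c ^ (j + 1) * ∑ s ∈ range (j + 2), c ^ s * Δ s)
        = c ^ j * (c * (2 * η * ∑ s ∈ range (j + 2), c ^ s * Δ s)) := by ring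
      _ ≤ c ^ j * ((1 + c) * (u 0 ^ 2 + 4 * c * B ^ 2)) :=
          mul_le_mul_of_nonneg_left
            (hamgm.trans' (mul_le_mul_of_nonneg_left hgap (by positivity))) (by positivity)
      _ = c ^ j * (1 + c) * (u 0 ^ 2 + 4 * c * B ^ 2) := by ring
      _ ≤ (∑ s ∈ range (j + 2), c ^ s) * (u 0 ^ 2 + 4 * c * B ^ 2) := by gcongr

lemma weighted_average_gap_le {η a : ℝ} (hη : 0 < η) (ha : 1 ≤ a) {Δ u ε : ℕ → ℝ}
    (hΔ : ∀ s, 0 ≤ Δ s) (hu : ∀ s, 0 ≤ u s) (hε : ∀ s, 0 ≤ ε s)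
    (hrec : ∀ s, 2 * η * Δ s + a ^ 2 * u (s + 1) ^ 2 ≤ u s ^ 2 + 2 * η * (ε s * u (s + 1)))
    (k : ℕ) :
    (∑ s ∈ range (k + 1), (a ^ 2) ^ s * Δ s) / (∑ s ∈ range (k + 1), (a ^ 2) ^ s)
      ≤ ((a ^ 2) ^ k)⁻¹ / (2 * η) * u 0 ^ 2
        + 2 * ((a ^ 2) ^ k)⁻¹ * (∑ s ∈ range (k + 1), √η * a ^ s * ε s) ^ 2 := by
  have ha0 : 0 < a := by linarith
  have hW : 0 < ∑ s ∈ range (k + 1), (a ^ 2) ^ s :=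
    sum_pos (fun s _ => by positivity) nonempty_range_add_one
  have hB : ∑ s ∈ range (k + 1), η * a ^ s * ε s / a
      = √η / a * ∑ s ∈ range (k + 1), √η * a ^ s * ε s := by
    rw [mul_sum]
    refine sum_congr rfl fun s _ => ?_
    field_simp
    rw [Real.sq_sqrt hη.le]
    ring
  have key := two_mul_pow_mul_sum_gap_le hη.le ha hΔ hu hε hrec k
  rw [hB] at key
  rw [div_le_iff₀ hW]
  rw [← mul_le_mul_iff_of_pos_left (by positivity : 0 < 2 * η * (a ^ 2) ^ k)]
  refine (le_of_eq (by ring)).trans (key.trans (le_of_eq ?_))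
  field_simp
  rw [Real.sq_sqrt hη.le]
  ring

theorem stmt_16_general {M : ℕ}
    (Λ : Set (EuclideanSpace ℝ (Fin M)))
    (hΛconv : Convex ℝ Λ)
    (μ : ℝ) (hμ : 0 < μ) (L : ℝ) (hL : 0 < L) (η₂ : ℝ) (hη₂ : η₂ = 1 / L)
    (Q : EuclideanSpace ℝ (Fin M) → ℝ) (hQdiff : Differentiable ℝ Q)
    (hQlip : ∀ x y : EuclideanSpace ℝ (Fin M),
      ‖gradient Q x - gradient Q y‖ ≤ L * ‖x - y‖)
    (hhconv : ConvexOn ℝ Set.univ (fun x => Q x - μ / 2 * ‖x‖ ^ 2))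
    (lamStar : EuclideanSpace ℝ (Fin M)) (hstarmem : lamStar ∈ Λ)
    (hstarmin : IsMinOn Q Λ lamStar)
    (e : ℕ → EuclideanSpace ℝ (Fin M))
    (lam : ℕ → EuclideanSpace ℝ (Fin M))
    (hstep : ∀ s : ℕ, lam (s + 1) ∈ Λ ∧
      IsMinOn
        (fun x => ⟪gradient (fun y => Q y - μ / 2 * ‖y‖ ^ 2) (lam s) + e s, x⟫
          + μ / 2 * ‖x‖ ^ 2 + 1 / (2 * η₂) * ‖x - lam s‖ ^ 2) Λ (lam (s + 1))) :
    ∀ m : ℕ, 1 ≤ m →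
      (∑ s ∈ Finset.range m, (1 + μ * η₂) ^ s * (Q (lam (s + 1)) - Q lamStar))
          / (∑ s ∈ Finset.range m, (1 + μ * η₂) ^ s)
        ≤ (1 + μ * η₂) ^ (-(m : ℤ) + 1) / (2 * η₂) * ‖lamStar - lam 0‖ ^ 2
          + 2 * (1 + μ * η₂) ^ (-(m : ℤ) + 1) *
            (∑ s ∈ Finset.range m,
              Real.sqrt η₂ * (1 + μ * η₂) ^ ((s : ℝ) / 2) * ‖e s‖) ^ 2 := by
  intro m hm
  obtain ⟨k, rfl⟩ := Nat.exists_eq_add_of_le' hm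
  have hη : 0 < η₂ := by rw [hη₂]; positivity
  have hc0 : 0 ≤ 1 + μ * η₂ := by positivity
  set a := √(1 + μ * η₂) with ha_def
  have ha : 1 ≤ a := Real.one_le_sqrt.2 (le_add_of_nonneg_right (by positivity))
  have hc : 1 + μ * η₂ = a ^ 2 := (Real.sq_sqrt hc0).symm
  have hrpow : ∀ s : ℕ, (1 + μ * η₂) ^ ((s : ℝ) / 2) = a ^ s := fun s => by
    rw [ha_def, Real.sqrt_eq_rpow, ← Real.rpow_natCast, ← Real.rpow_mul hc0]
    ring_nf
  have hzpow : (1 + μ * η₂) ^ (-((k + 1 : ℕ) : ℤ) + 1) = ((1 + μ * η₂) ^ k)⁻¹ := by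
    rw [show -((k + 1 : ℕ) : ℤ) + 1 = -(k : ℤ) by push_cast; ring, zpow_neg, zpow_natCast]
  simp_rw [hrpow, hzpow]
  rw [hc]
  refine weighted_average_gap_le (u := fun s => ‖lamStar - lam s‖) hη ha
    (fun s => sub_nonneg.2 (hstarmin (hstep s).1)) (fun s => norm_nonneg _)
    (fun s => norm_nonneg (e s)) (fun s => ?_) k
  rw [← hc]
  exact prox_gradient_step_le hΛconv hμ.le hη (by rw [hη₂, one_div_mul_cancel hL.ne']) hQdiff
    hQlip hhconv hstarmem (hstep s).1 (hstep s).2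

/-- Lemma 9 / Lemma inexact-md of the paper: for a
`μ`-strongly convex (`h(λ) = Q(λ) − (μ/2)‖λ‖²` convex) and `L`-smooth dual
function `Q` minimized over the nonempty closed convex set `Λ` by proximal
gradient descent with step size `η₂ = 1/L` and additive gradient errors `e_s`,
the geometrically weighted average of the suboptimality gaps satisfies, for
every `m ≥ 1`, with `c_s = (1 + μη₂)^s`:
`(∑_{s=1}^m c_{s−1}[Q(λ_s) − Q(λ*)]) / (∑_{s=1}^m c_{s−1})
  ≤ (1+μη₂)^{−m+1}/(2η₂) ‖λ* − λ₀‖²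
    + 2 (1+μη₂)^{−m+1} (∑_{s=0}^{m−1} √η₂ (1+μη₂)^{s/2} ‖e_s‖)²`. -/
theorem stmt_16 {M : ℕ}
    (Λ : Set (EuclideanSpace ℝ (Fin M)))
    (hΛne : Λ.Nonempty) (hΛcl : IsClosed Λ) (hΛconv : Convex ℝ Λ)
    (μ : ℝ) (hμ : 0 < μ) (L : ℝ) (hL : 0 < L) (η₂ : ℝ) (hη₂ : η₂ = 1 / L)
    (Q : EuclideanSpace ℝ (Fin M) → ℝ) (hQdiff : Differentiable ℝ Q)
    (hQlip : ∀ x y : EuclideanSpace ℝ (Fin M),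
      ‖gradient Q x - gradient Q y‖ ≤ L * ‖x - y‖)
    (hhconv : ConvexOn ℝ Set.univ (fun x => Q x - μ / 2 * ‖x‖ ^ 2))
    (lamStar : EuclideanSpace ℝ (Fin M)) (hstarmem : lamStar ∈ Λ)
    (hstarmin : IsMinOn Q Λ lamStar)
    (e : ℕ → EuclideanSpace ℝ (Fin M))
    (lam : ℕ → EuclideanSpace ℝ (Fin M)) (h₀ : lam 0 ∈ Λ)
    (hstep : ∀ s : ℕ, lam (s + 1) ∈ Λ ∧
      IsMinOn
        (fun x => ⟪gradient (fun y => Q y - μ / 2 * ‖y‖ ^ 2) (lam s) + e s, x⟫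
          + μ / 2 * ‖x‖ ^ 2 + 1 / (2 * η₂) * ‖x - lam s‖ ^ 2) Λ (lam (s + 1))) :
    ∀ m : ℕ, 1 ≤ m →
      (∑ s ∈ Finset.range m, (1 + μ * η₂) ^ s * (Q (lam (s + 1)) - Q lamStar))
          / (∑ s ∈ Finset.range m, (1 + μ * η₂) ^ s)
        ≤ (1 + μ * η₂) ^ (-(m : ℤ) + 1) / (2 * η₂) * ‖lamStar - lam 0‖ ^ 2
          + 2 * (1 + μ * η₂) ^ (-(m : ℤ) + 1) *
            (∑ s ∈ Finset.range m,
              Real.sqrt η₂ * (1 + μ * η₂) ^ ((s : ℝ) / 2) * ‖e s‖) ^ 2 :=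
  stmt_16_general Λ hΛconv μ hμ L hL η₂ hη₂ Q hQdiff hQlip hhconv lamStar hstarmem hstarmin e lam
    hstep
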